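/- arXiv:1701.02271 — 3 statements merged into one kernel-verified Lean document; each statement's English description precedes it below -/
import Mathlib

section
/- Let Y_1, …, Y_n be random variables with finite second moments satisfying |Cov(Y_i, Y_j)| ≤ r(|i−j|) for a sequence r with Σ_{m=0}^∞ r(m) = S < ∞, E Y_i = 0, and |Y_i| ≤ K a.s. Then for any ε > 0 and 1 ≤ m ≤ n, P(max_{m ≤ k ≤ n} (1/k)|Σ_{i=1}^k Y_i| > ε) ≤ C/(ε² √m), where C depends only on S and K. -/
/-!
Chebyshev's inequality with `E (∑_{i ≤ j} Y i)² ≤ 2 S j` bounds `P(|S_j| > ε j / 3)` by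
`18 S / (ε² j)`, but a union bound over `m ≤ j ≤ n` would lose a factor `log (n / m)`.
Boundedness removes it: if `|S_k| > ε k`, then, the increments being at most `K`,
`|S_j| > ε j / 3` for every `j` in the window `[k, k + ε k / (2 K)]`, so the weight
`∑_j j⁻¹ 1{|S_j| > ε j / 3}` is at least `ε / (4 K)`. Markov's inequality for this weight gives
`P ≤ 144 S K / (ε³ m)`, which together with `P ≤ 1` yields `C / (ε² √m)`; for `ε ≥ K` the event
is null.
-/

open MeasureTheory ProbabilityTheory Finset Filter

lemma sum_Icc_inv_sq_le_two_div {m : ℕ} (hm : 1 ≤ m) (N : ℕ) :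
    ∑ k ∈ Icc m N, ((k : ℝ) ^ 2)⁻¹ ≤ 2 / m := by
  have hsub : Icc m N ⊆ Ioo (m - 1) (N + 1) := fun k hk => by
    simp only [mem_Icc, mem_Ioo] at hk ⊢; omega
  calc ∑ k ∈ Icc m N, ((k : ℝ) ^ 2)⁻¹ ≤ ∑ k ∈ Ioo (m - 1) (N + 1), ((k : ℝ) ^ 2)⁻¹ :=
        sum_le_sum_of_subset_of_nonneg hsub fun _ _ _ => by positivity
    _ ≤ 2 / ((m - 1 : ℕ) + 1) := sum_Ioo_inv_sq_le _ _
    _ = 2 / m := by rw [Nat.cast_sub hm, Nat.cast_one, sub_add_cancel]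

lemma sum_natAbs_sub_le_two_mul {r : ℕ → ℝ} {S : ℝ} (hr0 : ∀ d, 0 ≤ r d) (hr : HasSum r S)
    (i : ℕ) (s : Finset ℕ) : ∑ j ∈ s, r ((i - j : ℤ)).natAbs ≤ 2 * S := by
  have half : ∀ t : Finset ℕ, Set.InjOn (fun j : ℕ => ((i - j : ℤ)).natAbs) t →
      ∑ j ∈ t, r ((i - j : ℤ)).natAbs ≤ S := fun t ht =>
    (sum_image ht).symm.le.trans (sum_le_hasSum _ (fun d _ => hr0 d) hr)
  rw [← sum_filter_add_sum_filter_not s (· ≤ i), two_mul]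
  gcongr <;> apply half <;> intro x hx y hy hxy <;> simp at hx hy hxy <;> omega

lemma abs_sum_Icc_sub_sum_Icc_le {x : ℕ → ℝ} {K : ℝ} (hx : ∀ i, |x i| ≤ K) {i j : ℕ}
    (hij : i ≤ j) : |∑ l ∈ Icc 1 j, x l - ∑ l ∈ Icc 1 i, x l| ≤ K * (j - i) := by
  have hsplit : ∑ l ∈ Icc 1 j, x l - ∑ l ∈ Icc 1 i, x l = ∑ l ∈ Ioc i j, x l := by
    have hIcc : ∀ k : ℕ, Icc 1 k = Ioc 0 k := Icc_add_one_left_eq_Ioc 0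
    rw [hIcc, hIcc, ← sum_Ioc_consecutive _ (Nat.zero_le i) hij, add_sub_cancel_left]
  calc |∑ l ∈ Icc 1 j, x l - ∑ l ∈ Icc 1 i, x l| ≤ ∑ l ∈ Ioc i j, |x l| :=
        hsplit ▸ abs_sum_le_sum_abs _ _
    _ ≤ #(Ioc i j) • K := sum_le_card_nsmul _ _ _ fun l _ => hx l
    _ = K * (j - i) := by rw [Nat.card_Ioc, nsmul_eq_mul, Nat.cast_sub hij, mul_comm]

lemma div_two_mul_le_sum_Icc_inv {k T : ℕ} (hk : 1 ≤ k) (hT : T ≤ k) :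
    ((T + 1 : ℕ) : ℝ) / (2 * k) ≤ ∑ j ∈ Icc k (k + T), (j : ℝ)⁻¹ := by
  calc ((T + 1 : ℕ) : ℝ) / (2 * k) = ∑ j ∈ Icc k (k + T), (2 * k : ℝ)⁻¹ := by
        rw [sum_const, Nat.card_Icc, show k + T + 1 - k = T + 1 by omega, nsmul_eq_mul,
          div_eq_mul_inv]
    _ ≤ ∑ j ∈ Icc k (k + T), (j : ℝ)⁻¹ := sum_le_sum fun j hj => by
        rw [mem_Icc] at hj
        have hj0 : (0 : ℝ) < j := by exact_mod_cast hk.trans hj.1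
        have hj2 : (j : ℝ) ≤ 2 * k := by exact_mod_cast (by omega : j ≤ 2 * k)
        gcongr

lemma div_four_mul_le_sum_inv_of_lt_abs {s : ℕ → ℝ} {K ε : ℝ} (hs0 : s 0 = 0)
    (hs : ∀ i j, i ≤ j → |s j - s i| ≤ K * (j - i)) (hε : 0 < ε) {k : ℕ} (hk : 1 ≤ k)
    (hsk : ε * k < |s k|) :
    ε / (4 * K) ≤
      ∑ j ∈ Icc k (2 * k), {j : ℕ | ε * j / 3 < |s j|}.indicator (fun j => (j : ℝ)⁻¹) j := by
  have hk0 : (0 : ℝ) < k := by exact_mod_cast hk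
  have hεK : ε < K := by
    have := hs 0 k (Nat.zero_le k)
    rw [hs0, sub_zero, Nat.cast_zero, sub_zero] at this
    exact lt_of_mul_lt_mul_right (hsk.trans_le this) hk0.le
  have hK : 0 < K := hε.trans hεK
  set T := ⌊ε * k / (2 * K)⌋₊
  have hTK : T * K ≤ ε * k / 2 := by
    calc T * K ≤ ε * k / (2 * K) * K := by gcongr; exact Nat.floor_le (by positivity)
      _ = ε * k / 2 := by field_simp
  have hTk : 2 * T ≤ k := by
    have : 2 * (T : ℝ) ≤ k := by nlinarith [mul_le_mul_of_nonneg_left hεK.le (Nat.cast_nonneg T)]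
    exact_mod_cast this
  have hpersist : ∀ j ∈ Icc k (k + T), j ∈ {j : ℕ | ε * j / 3 < |s j|} := fun j hj => by
    rw [mem_Icc] at hj
    have hjk : (j : ℝ) ≤ k + T := by exact_mod_cast hj.2
    have hinc : |s k - s j| ≤ K * T := by
      rw [abs_sub_comm]
      exact (hs k j hj.1).trans (mul_le_mul_of_nonneg_left (by linarith) hK.le)
    have := abs_sub_abs_le_abs_sub (s k) (s j)
    show ε * j / 3 < |s j|
    nlinarith
  calc ε / (4 * K) ≤ ((T + 1 : ℕ) : ℝ) / (2 * k) := by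
        have := Nat.lt_floor_add_one (ε * k / (2 * K))
        rw [div_lt_iff₀ (by positivity)] at this
        rw [div_le_div_iff₀ (by positivity) (by positivity)]
        push_cast
        nlinarith
    _ ≤ ∑ j ∈ Icc k (k + T), (j : ℝ)⁻¹ := div_two_mul_le_sum_Icc_inv hk (by omega)
    _ = ∑ j ∈ Icc k (k + T), {j : ℕ | ε * j / 3 < |s j|}.indicator (fun j => (j : ℝ)⁻¹) j :=
        sum_congr rfl fun j hj =>
          (Set.indicator_of_mem (hpersist j hj) fun j : ℕ => (j : ℝ)⁻¹).symm
    _ ≤ ∑ j ∈ Icc k (2 * k), {j : ℕ | ε * j / 3 < |s j|}.indicator (fun j => (j : ℝ)⁻¹) j :=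
        sum_le_sum_of_subset_of_nonneg (Icc_subset_Icc le_rfl (by omega))
          fun j _ _ => Set.indicator_nonneg (fun _ _ => by positivity) _

lemma le_div_sq_mul_sqrt_of_le_min {p a K ε m : ℝ} (ha : 0 ≤ a) (hε : 0 < ε) (hεK : ε ≤ K)
    (hm : 0 < m) (hp1 : p ≤ 1) (hp : p ≤ a * K / (ε ^ 3 * m)) :
    p ≤ (a * K ^ 2 + 1) / (ε ^ 2 * √m) := by
  set C := a * K ^ 2 + 1
  have hs : 0 < √m := Real.sqrt_pos.2 hm
  rcases le_or_gt (ε ^ 2 * √m) C with h | h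
  · exact hp1.trans ((one_le_div (by positivity)).2 h)
  · have hK : 0 < K := hε.trans_le hεK
    have hC : a * K ≤ C * (ε * √m) := by
      refine le_of_mul_le_mul_left ?_ hK
      calc K * (a * K) ≤ C * C := by nlinarith [sq_nonneg K, mul_nonneg ha (sq_nonneg K)]
        _ ≤ C * (ε ^ 2 * √m) := by gcongr
        _ ≤ C * (K * (ε * √m)) := by rw [sq, mul_assoc]; gcongr
        _ = K * (C * (ε * √m)) := by ring
    calc p ≤ a * K / (ε ^ 3 * m) := hp
      _ ≤ C * (ε * √m) / (ε ^ 3 * m) := by gcongr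
      _ = C * (ε * √m) / (ε ^ 3 * √m ^ 2) := by rw [Real.sq_sqrt hm.le]
      _ = C / (ε ^ 2 * √m) := by field_simp

section

variable {Ω : Type*} [MeasurableSpace Ω] {μ : Measure Ω}

lemma measureReal_lt_abs_le_integral_sq_div [IsFiniteMeasure μ] {g : Ω → ℝ}
    (hg : Integrable (fun ω => g ω ^ 2) μ) {a : ℝ} (ha : 0 < a) :
    μ.real {ω | a < |g ω|} ≤ (∫ ω, g ω ^ 2 ∂μ) / a ^ 2 := by
  rw [le_div_iff₀ (by positivity), mul_comm]
  refine le_trans ?_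
    (mul_meas_ge_le_integral_of_nonneg (ae_of_all _ fun ω => sq_nonneg (g ω)) hg (a ^ 2))
  refine mul_le_mul_of_nonneg_left (measureReal_mono fun ω hω => ?_) (sq_nonneg a)
  rw [Set.mem_ofPred_eq, ← sq_abs (g ω)]
  exact pow_le_pow_left₀ ha.le (le_of_lt hω) 2

lemma integral_sq_sum_le {Y : ℕ → Ω → ℝ} {r : ℕ → ℝ} {S : ℝ} (hY : ∀ i, MemLp (Y i) 2 μ)
    (hcov : ∀ i j : ℕ, |∫ ω, Y i ω * Y j ω ∂μ| ≤ r ((i - j : ℤ)).natAbs) (hr : HasSum r S)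
    (s : Finset ℕ) : ∫ ω, (∑ i ∈ s, Y i ω) ^ 2 ∂μ ≤ 2 * S * #s := by
  have hr0 : ∀ d, 0 ≤ r d := fun d => (abs_nonneg _).trans (by simpa using hcov d 0)
  have hprod : ∀ i j, Integrable (fun ω => Y i ω * Y j ω) μ := fun i j =>
    (hY i).integrable_mul (hY j)
  calc ∫ ω, (∑ i ∈ s, Y i ω) ^ 2 ∂μ = ∑ i ∈ s, ∑ j ∈ s, ∫ ω, Y i ω * Y j ω ∂μ := by
        simp_rw [sq, sum_mul_sum]
        rw [integral_finsetSum _ fun i _ => integrable_finsetSum _ fun j _ => hprod i j]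
        exact sum_congr rfl fun i _ => integral_finsetSum _ fun j _ => hprod i j
    _ ≤ ∑ i ∈ s, 2 * S := sum_le_sum fun i _ =>
        (sum_le_sum fun j _ => (le_abs_self _).trans (hcov i j)).trans
          (sum_natAbs_sub_le_two_mul hr0 hr i s)
    _ = 2 * S * #s := by rw [sum_const, nsmul_eq_mul, mul_comm]

lemma measureReal_lt_abs_sum_le [IsFiniteMeasure μ] {Y : ℕ → Ω → ℝ} {r : ℕ → ℝ} {S : ℝ}
    (hY : ∀ i, MemLp (Y i) 2 μ)
    (hcov : ∀ i j : ℕ, |∫ ω, Y i ω * Y j ω ∂μ| ≤ r ((i - j : ℤ)).natAbs) (hr : HasSum r S)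
    (s : Finset ℕ) {a : ℝ} (ha : 0 < a) :
    μ.real {ω | a < |∑ i ∈ s, Y i ω|} ≤ 2 * S * #s / a ^ 2 :=
  (measureReal_lt_abs_le_integral_sq_div (memLp_finsetSum _ fun i _ => hY i).integrable_sq ha).trans
    (by gcongr; exact integral_sq_sum_le hY hcov hr s)

lemma integral_sum_indicator_inv_le [IsFiniteMeasure μ] {A : ℕ → Set Ω}
    (hA : ∀ j, MeasurableSet (A j)) {c : ℝ} {m : ℕ} (hm : 1 ≤ m)
    (hμA : ∀ j, m ≤ j → μ.real (A j) ≤ c / j) (N : ℕ) :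
    ∫ ω, ∑ j ∈ Icc m N, (A j).indicator (fun _ => (j : ℝ)⁻¹) ω ∂μ ≤ 2 * c / m := by
  have hc : 0 ≤ c := by
    have := measureReal_nonneg.trans (hμA m le_rfl)
    rwa [le_div_iff₀ (by exact_mod_cast hm), zero_mul] at this
  rw [integral_finsetSum _ fun j _ => (integrable_indicator_iff (hA j)).2 integrableOn_const]
  calc ∑ j ∈ Icc m N, ∫ ω, (A j).indicator (fun _ => (j : ℝ)⁻¹) ω ∂μ
      = ∑ j ∈ Icc m N, μ.real (A j) * (j : ℝ)⁻¹ := by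
        simp only [integral_indicator_const _ (hA _), smul_eq_mul]
    _ ≤ ∑ j ∈ Icc m N, c * ((j : ℝ) ^ 2)⁻¹ := sum_le_sum fun j hj => by
        rw [mem_Icc] at hj
        calc μ.real (A j) * (j : ℝ)⁻¹ ≤ c / j * (j : ℝ)⁻¹ := by gcongr; exact hμA j hj.1
          _ = c * ((j : ℝ) ^ 2)⁻¹ := by ring
    _ ≤ c * (2 / m) := by
        rw [← mul_sum]; exact mul_le_mul_of_nonneg_left (sum_Icc_inv_sq_le_two_div hm N) hc
    _ = 2 * c / m := by ring

lemma measure_exists_lt_abs_sum_div_eq_zero {Y : ℕ → Ω → ℝ} {K ε : ℝ}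
    (hbdd : ∀ i, ∀ᵐ ω ∂μ, |Y i ω| ≤ K) (hKε : K ≤ ε) (hε : 0 ≤ ε) (s : Finset ℕ) :
    μ {ω | ∃ k ∈ s, ε < |∑ i ∈ Icc 1 k, Y i ω| / k} = 0 := by
  rw [measure_eq_zero_iff_ae_notMem]
  filter_upwards [ae_all_iff.2 hbdd] with ω hω ⟨k, _, hlt⟩
  have h := abs_sum_Icc_sub_sum_Icc_le hω (Nat.zero_le k)
  simp only [Icc_eq_empty_of_lt zero_lt_one, sum_empty, sub_zero, Nat.cast_zero] at h
  exact hlt.not_ge (div_le_of_le_mul₀ (Nat.cast_nonneg k) hε (h.trans (by gcongr)))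

lemma measureReal_exists_lt_abs_sum_div_le [IsFiniteMeasure μ] {Y : ℕ → Ω → ℝ} {r : ℕ → ℝ}
    {S K ε : ℝ} (hmeas : ∀ i, Measurable (Y i)) (hbdd : ∀ i, ∀ᵐ ω ∂μ, |Y i ω| ≤ K)
    (hcov : ∀ i j : ℕ, |∫ ω, Y i ω * Y j ω ∂μ| ≤ r ((i - j : ℤ)).natAbs) (hr : HasSum r S)
    (hε : 0 < ε) (hK : 0 < K) {m : ℕ} (hm : 1 ≤ m) (n : ℕ) :
    μ.real {ω | ∃ k ∈ Icc m n, ε < |∑ i ∈ Icc 1 k, Y i ω| / k} ≤ 144 * S * K / (ε ^ 3 * m) := by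
  set A : ℕ → Set Ω := fun j => {ω | ε * j / 3 < |∑ i ∈ Icc 1 j, Y i ω|}
  have hA : ∀ j, MeasurableSet (A j) := fun j =>
    measurableSet_lt measurable_const (Finset.measurable_sum _ fun i _ => hmeas i).abs
  have hY : ∀ i, MemLp (Y i) 2 μ := fun i =>
    MemLp.of_bound (hmeas i).aestronglyMeasurable K
      ((hbdd i).mono fun _ h => by rwa [Real.norm_eq_abs])
  have hμA : ∀ j, m ≤ j → μ.real (A j) ≤ 18 * S / ε ^ 2 / j := fun j hj => by
    have hj : (0 : ℝ) < j := by exact_mod_cast hm.trans hj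
    calc μ.real (A j) ≤ 2 * S * #(Icc 1 j) / (ε * j / 3) ^ 2 :=
          measureReal_lt_abs_sum_le hY hcov hr _ (by positivity)
      _ = 18 * S / ε ^ 2 / j := by rw [Nat.card_Icc, Nat.add_sub_cancel]; field_simp; ring
  set f : Ω → ℝ := fun ω => ∑ j ∈ Icc m (2 * n), (A j).indicator (fun _ => (j : ℝ)⁻¹) ω
  have hf : ∫ ω, f ω ∂μ ≤ 2 * (18 * S / ε ^ 2) / m :=
    integral_sum_indicator_inv_le hA hm hμA (2 * n)
  have hf_int : Integrable f μ := integrable_finsetSum _ fun j _ =>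
    (integrable_indicator_iff (hA j)).2 integrableOn_const
  have hf0 : 0 ≤ᵐ[μ] f := ae_of_all _ fun ω =>
    sum_nonneg fun j _ => Set.indicator_nonneg (fun _ _ => by positivity) _
  have hEf : {ω | ∃ k ∈ Icc m n, ε < |∑ i ∈ Icc 1 k, Y i ω| / k}
      ≤ᵐ[μ] {ω | ε / (4 * K) ≤ f ω} := by
    filter_upwards [ae_all_iff.2 hbdd] with ω hω ⟨k, hk, hlt⟩
    rw [mem_Icc] at hk
    calc ε / (4 * K) ≤ ∑ j ∈ Icc k (2 * k),
          {j : ℕ | ε * j / 3 < |∑ i ∈ Icc 1 j, Y i ω|}.indicator (fun j => (j : ℝ)⁻¹) j :=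
          div_four_mul_le_sum_inv_of_lt_abs (by simp)
            (fun i j hij => abs_sum_Icc_sub_sum_Icc_le hω hij) hε (hm.trans hk.1)
            ((lt_div_iff₀ (by exact_mod_cast hm.trans hk.1)).1 hlt)
      _ ≤ f ω := sum_le_sum_of_subset_of_nonneg (Icc_subset_Icc hk.1 (by omega))
          fun j _ _ => Set.indicator_nonneg (fun _ _ => by positivity) _
  have hc : 0 < ε / (4 * K) := by positivity
  calc μ.real {ω | ∃ k ∈ Icc m n, ε < |∑ i ∈ Icc 1 k, Y i ω| / k}
      ≤ μ.real {ω | ε / (4 * K) ≤ f ω} :=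
        ENNReal.toReal_mono (measure_ne_top _ _) (measure_mono_ae hEf)
    _ ≤ (∫ ω, f ω ∂μ) / (ε / (4 * K)) := by
        rw [le_div_iff₀ hc, mul_comm]; exact mul_meas_ge_le_integral_of_nonneg hf0 hf_int _
    _ ≤ 2 * (18 * S / ε ^ 2) / m / (ε / (4 * K)) := by gcongr
    _ = 144 * S * K / (ε ^ 3 * m) := by field_simp; ring

end

theorem hajek_renyi_inequality_general (S K : ℝ) (hS : 0 ≤ S) :
    ∃ C > 0, ∀ (Ω : Type) [MeasureSpace Ω] [IsProbabilityMeasure (ℙ : Measure Ω)]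
      (n : ℕ) (Y : ℕ → Ω → ℝ) (r : ℕ → ℝ),
      (∀ i, Measurable (Y i)) →
      (∀ i, Integrable (fun ω => (Y i ω) ^ 2)) →
      (∀ i, (∫ ω, Y i ω) = 0) →
      (∀ i, ∀ᵐ ω ∂(ℙ : Measure Ω), |Y i ω| ≤ K) →
      (∀ i j : ℕ, |∫ ω, Y i ω * Y j ω| ≤ r ((i - j : ℤ)).natAbs) →
      HasSum r S →
      ∀ ε : ℝ, 0 < ε → ∀ m : ℕ, 1 ≤ m → m ≤ n →
        (ℙ {ω | ∃ k ∈ Finset.Icc m n,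
            ε < |∑ i ∈ Finset.Icc 1 k, Y i ω| / k}).toReal
          ≤ C / (ε ^ 2 * Real.sqrt m) := by
  refine ⟨144 * S * K ^ 2 + 1, by positivity, ?_⟩
  intro Ω _ _ n Y r hmeas _ _ hbdd hcov hr ε hε m hm _
  rcases le_or_gt K ε with hKε | hεK
  · rw [measure_exists_lt_abs_sum_div_eq_zero hbdd hKε hε.le, ENNReal.toReal_zero]
    positivity
  · exact le_div_sq_mul_sqrt_of_le_min (by positivity) hε hεK.le (by exact_mod_cast hm)
      measureReal_le_one
      (measureReal_exists_lt_abs_sum_div_le hmeas hbdd hcov hr hε (hε.trans hεK) hm n)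

/-- Hájek–Rényi type inequality: for centered variables bounded by `K` with summable
covariance bound `r` (with sum `S`), there is `C` depending only on `S` and `K` such that
`P(max_{m ≤ k ≤ n} (1/k)|∑_{i=1}^k Y_i| > ε) ≤ C / (ε² √m)`. -/
theorem hajek_renyi_inequality (S K : ℝ) (hS : 0 ≤ S) (hK : 0 ≤ K) :
    ∃ C > 0, ∀ (Ω : Type) [MeasureSpace Ω] [IsProbabilityMeasure (ℙ : Measure Ω)]
      (n : ℕ) (Y : ℕ → Ω → ℝ) (r : ℕ → ℝ),
      (∀ i, Measurable (Y i)) →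
      (∀ i, Integrable (fun ω => (Y i ω) ^ 2)) →
      (∀ i, (∫ ω, Y i ω) = 0) →
      (∀ i, ∀ᵐ ω ∂(ℙ : Measure Ω), |Y i ω| ≤ K) →
      (∀ i j : ℕ, |∫ ω, Y i ω * Y j ω| ≤ r ((i - j : ℤ)).natAbs) →
      HasSum r S →
      ∀ ε : ℝ, 0 < ε → ∀ m : ℕ, 1 ≤ m → m ≤ n →
        (ℙ {ω | ∃ k ∈ Finset.Icc m n,
            ε < |∑ i ∈ Finset.Icc 1 k, Y i ω| / k}).toReal
          ≤ C / (ε ^ 2 * Real.sqrt m) :=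
  hajek_renyi_inequality_general S K hS
end

section
/- (Kokoszka–Leipus Hájek–Rényi type inequality) Let X_1,…,X_n be random variables with finite second moments and c_1,…,c_n nonnegative constants. Then for every ε > 0 and 1 ≤ m ≤ n: ε² P(max_{m≤k≤n} c_k |Σ_{i=1}^k X_i| > ε) ≤ c_m² Σ_{i,j=1}^m E(X_i X_j) + Σ_{k=m}^{n−1} |c_{k+1}² − c_k²| Σ_{i,j=1}^k E(X_i X_j) + 2 Σ_{k=m}^{n−1} c_{k+1}² E(|X_{k+1}| |Σ_{j=1}^k X_j|) + Σ_{k=m}^{n−1} c_{k+1}² E(X_{k+1}²). -/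
open MeasureTheory ProbabilityTheory Finset

/-!
Write `S_k = X_1 + ⋯ + X_k`. Expanding `S_{k+1} = S_k + X_{k+1}` gives, pathwise,
`c_{k+1}² S_{k+1}² ≤ c_k² S_k² + T_k` with
`T_k = |c_{k+1}² - c_k²| S_k² + 2 c_{k+1}² |X_{k+1}| |S_k| + c_{k+1}² X_{k+1}² ≥ 0`,
so telescoping from `m` bounds every `c_k² S_k²` with `m ≤ k ≤ n` by the single integrable
variable `M = c_m² S_m² + ∑_{m ≤ k < n} T_k`. The event `max_{m ≤ k ≤ n} c_k |S_k| > ε` lies in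
`{ε² ≤ M}`, and Markov's inequality bounds `ε² ℙ(ε² ≤ M)` by `E M`, which is the right-hand side.
-/

namespace KokoszkaLeipus

def partialSum (x : ℕ → ℝ) (k : ℕ) : ℝ := ∑ i ∈ Icc 1 k, x i

lemma partialSum_succ (x : ℕ → ℝ) (k : ℕ) :
    partialSum x (k + 1) = partialSum x k + x (k + 1) :=
  sum_Icc_succ_top (Nat.le_add_left 1 k) x

def sqIncrementBound (c x : ℕ → ℝ) (k : ℕ) : ℝ :=
  |c (k + 1) ^ 2 - c k ^ 2| * partialSum x k ^ 2
    + 2 * c (k + 1) ^ 2 * (|x (k + 1)| * |partialSum x k|)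
    + c (k + 1) ^ 2 * x (k + 1) ^ 2

def sqMajorant (c x : ℕ → ℝ) (m n : ℕ) : ℝ :=
  c m ^ 2 * partialSum x m ^ 2 + ∑ k ∈ Ico m n, sqIncrementBound c x k

section Pathwise

variable (c x : ℕ → ℝ)

lemma sqIncrementBound_nonneg (k : ℕ) : 0 ≤ sqIncrementBound c x k := by
  unfold sqIncrementBound
  positivity

lemma sq_mul_add_sq_le (a b s t : ℝ) :
    b ^ 2 * (s + t) ^ 2
      ≤ a ^ 2 * s ^ 2 + (|b ^ 2 - a ^ 2| * s ^ 2 + 2 * b ^ 2 * (|t| * |s|) + b ^ 2 * t ^ 2) := by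
  have hcoef : (b ^ 2 - a ^ 2) * s ^ 2 ≤ |b ^ 2 - a ^ 2| * s ^ 2 :=
    mul_le_mul_of_nonneg_right (le_abs_self _) (sq_nonneg s)
  have hcross : b ^ 2 * (t * s) ≤ b ^ 2 * (|t| * |s|) :=
    mul_le_mul_of_nonneg_left (abs_mul t s ▸ le_abs_self _) (sq_nonneg b)
  linear_combination hcoef + 2 * hcross

lemma sq_mul_partialSum_succ_le (k : ℕ) :
    c (k + 1) ^ 2 * partialSum x (k + 1) ^ 2
      ≤ c k ^ 2 * partialSum x k ^ 2 + sqIncrementBound c x k := by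
  rw [partialSum_succ]
  exact sq_mul_add_sq_le _ _ _ _

lemma sq_mul_partialSum_le_add_sum {m k : ℕ} (hmk : m ≤ k) :
    c k ^ 2 * partialSum x k ^ 2
      ≤ c m ^ 2 * partialSum x m ^ 2 + ∑ j ∈ Ico m k, sqIncrementBound c x j := by
  induction k, hmk using Nat.le_induction with
  | base => simp
  | succ k hmk ih =>
    rw [sum_Ico_succ_top hmk]
    linarith [sq_mul_partialSum_succ_le c x k]

lemma sq_mul_partialSum_le_sqMajorant {m n k : ℕ} (hk : k ∈ Icc m n) :
    c k ^ 2 * partialSum x k ^ 2 ≤ sqMajorant c x m n := by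
  obtain ⟨hmk, hkn⟩ := mem_Icc.1 hk
  calc c k ^ 2 * partialSum x k ^ 2
      ≤ c m ^ 2 * partialSum x m ^ 2 + ∑ j ∈ Ico m k, sqIncrementBound c x j :=
        sq_mul_partialSum_le_add_sum c x hmk
    _ ≤ sqMajorant c x m n :=
        add_le_add_right (sum_le_sum_of_subset_of_nonneg (Ico_subset_Ico le_rfl hkn)
          fun j _ _ => sqIncrementBound_nonneg c x j) _

lemma sqMajorant_nonneg (m n : ℕ) : 0 ≤ sqMajorant c x m n :=
  add_nonneg (by positivity) (sum_nonneg fun k _ => sqIncrementBound_nonneg c x k)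

end Pathwise

section Expectation

variable {Ω : Type*} [MeasurableSpace Ω] {μ : Measure Ω} {X : ℕ → Ω → ℝ}
  (hX : ∀ i, MemLp (X i) 2 μ) (c : ℕ → ℝ)
include hX

lemma memLp_partialSum (k : ℕ) : MemLp (fun ω => partialSum (X · ω) k) 2 μ :=
  memLp_finsetSum _ fun i _ => hX i

lemma integral_partialSum_sq (k : ℕ) :
    ∫ ω, partialSum (X · ω) k ^ 2 ∂μ
      = ∑ i ∈ Icc 1 k, ∑ j ∈ Icc 1 k, ∫ ω, X i ω * X j ω ∂μ := by
  have hprod : ∀ i j, Integrable (fun ω => X i ω * X j ω) μ :=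
    fun i j => (hX i).integrable_mul (hX j)
  simp only [partialSum, sq, sum_mul_sum]
  rw [integral_finsetSum _ fun i _ => integrable_finsetSum _ fun j _ => hprod i j]
  exact sum_congr rfl fun i _ => integral_finsetSum _ fun j _ => hprod i j

lemma integrable_abs_mul_abs_partialSum (k : ℕ) :
    Integrable (fun ω => |X (k + 1) ω| * |partialSum (X · ω) k|) μ :=
  (hX (k + 1)).abs.integrable_mul (memLp_partialSum hX k).abs

lemma integrable_sqIncrementBound (k : ℕ) :
    Integrable (fun ω => sqIncrementBound c (X · ω) k) μ :=
  ((((memLp_partialSum hX k).integrable_sq.const_mul _).add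
    ((integrable_abs_mul_abs_partialSum hX k).const_mul _)).add
    ((hX (k + 1)).integrable_sq.const_mul _))

lemma integral_sqIncrementBound (k : ℕ) :
    ∫ ω, sqIncrementBound c (X · ω) k ∂μ
      = |c (k + 1) ^ 2 - c k ^ 2| * (∑ i ∈ Icc 1 k, ∑ j ∈ Icc 1 k, ∫ ω, X i ω * X j ω ∂μ)
        + 2 * (c (k + 1) ^ 2 * ∫ ω, |X (k + 1) ω| * |partialSum (X · ω) k| ∂μ)
        + c (k + 1) ^ 2 * ∫ ω, X (k + 1) ω ^ 2 ∂μ := by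
  have hS := (memLp_partialSum hX k).integrable_sq.const_mul |c (k + 1) ^ 2 - c k ^ 2|
  have hXS := (integrable_abs_mul_abs_partialSum hX k).const_mul (2 * c (k + 1) ^ 2)
  have hXX := (hX (k + 1)).integrable_sq.const_mul (c (k + 1) ^ 2)
  simp only [sqIncrementBound]
  rw [integral_add ?_ hXX, integral_add hS hXS, integral_const_mul, integral_const_mul,
    integral_const_mul, integral_partialSum_sq hX, mul_assoc]
  exact hS.add hXS

lemma integrable_sqMajorant (m n : ℕ) : Integrable (fun ω => sqMajorant c (X · ω) m n) μ :=
  ((memLp_partialSum hX m).integrable_sq.const_mul _).add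
    (integrable_finsetSum _ fun k _ => integrable_sqIncrementBound hX c k)

lemma integral_sqMajorant (m n : ℕ) :
    ∫ ω, sqMajorant c (X · ω) m n ∂μ
      = c m ^ 2 * (∑ i ∈ Icc 1 m, ∑ j ∈ Icc 1 m, ∫ ω, X i ω * X j ω ∂μ)
        + (∑ k ∈ Ico m n, |c (k + 1) ^ 2 - c k ^ 2| *
            (∑ i ∈ Icc 1 k, ∑ j ∈ Icc 1 k, ∫ ω, X i ω * X j ω ∂μ))
        + 2 * (∑ k ∈ Ico m n, c (k + 1) ^ 2 *
            ∫ ω, |X (k + 1) ω| * |partialSum (X · ω) k| ∂μ)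
        + ∑ k ∈ Ico m n, c (k + 1) ^ 2 * ∫ ω, X (k + 1) ω ^ 2 ∂μ := by
  simp only [sqMajorant]
  rw [integral_add ((memLp_partialSum hX m).integrable_sq.const_mul _)
      (integrable_finsetSum _ fun k _ => integrable_sqIncrementBound hX c k),
    integral_const_mul, integral_partialSum_sq hX,
    integral_finsetSum _ fun k _ => integrable_sqIncrementBound hX c k]
  simp only [integral_sqIncrementBound hX c, sum_add_distrib, mul_sum]
  ring

lemma mul_measureReal_le_integral_sqMajorant [IsFiniteMeasure μ] (m n : ℕ) {ε : ℝ}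
    (hε : 0 < ε) :
    ε ^ 2 * μ.real {ω | ∃ k ∈ Icc m n, ε < c k * |partialSum (X · ω) k|}
      ≤ ∫ ω, sqMajorant c (X · ω) m n ∂μ := by
  have hsub : {ω | ∃ k ∈ Icc m n, ε < c k * |partialSum (X · ω) k|}
      ⊆ {ω | ε ^ 2 ≤ sqMajorant c (X · ω) m n} := by
    rintro ω ⟨k, hk, hlt⟩
    have hsq : ε ^ 2 < (c k * |partialSum (X · ω) k|) ^ 2 :=
      pow_lt_pow_left₀ hlt hε.le two_ne_zero
    rw [mul_pow, sq_abs] at hsq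
    exact hsq.le.trans (sq_mul_partialSum_le_sqMajorant c (X · ω) hk)
  calc ε ^ 2 * μ.real {ω | ∃ k ∈ Icc m n, ε < c k * |partialSum (X · ω) k|}
      ≤ ε ^ 2 * μ.real {ω | ε ^ 2 ≤ sqMajorant c (X · ω) m n} :=
        mul_le_mul_of_nonneg_left (measureReal_mono hsub) (sq_nonneg ε)
    _ ≤ ∫ ω, sqMajorant c (X · ω) m n ∂μ :=
        mul_meas_ge_le_integral_of_nonneg (ae_of_all _ fun ω => sqMajorant_nonneg c (X · ω) m n)
          (integrable_sqMajorant hX c m n) _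

end Expectation

end KokoszkaLeipus

open KokoszkaLeipus

theorem kokoszka_leipus_inequality_general
    {Ω : Type*} [MeasureSpace Ω] [IsProbabilityMeasure (ℙ : Measure Ω)]
    (n : ℕ) (X : ℕ → Ω → ℝ) (c : ℕ → ℝ)
    (hmeas : ∀ i, Measurable (X i))
    (hL2 : ∀ i, Integrable (fun ω => (X i ω) ^ 2))
    (m : ℕ) (hm : 1 ≤ m)
    (ε : ℝ) (hε : 0 < ε) :
    ε ^ 2 * (ℙ {ω | ∃ k ∈ Finset.Icc m n,
        ε < c k * |∑ i ∈ Finset.Icc 1 k, X i ω|}).toReal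
      ≤ c m ^ 2 * (∑ i ∈ Finset.Icc 1 m, ∑ j ∈ Finset.Icc 1 m, ∫ ω, X i ω * X j ω)
        + (∑ k ∈ Finset.Icc m (n - 1), |c (k + 1) ^ 2 - c k ^ 2| *
            (∑ i ∈ Finset.Icc 1 k, ∑ j ∈ Finset.Icc 1 k, ∫ ω, X i ω * X j ω))
        + 2 * (∑ k ∈ Finset.Icc m (n - 1), c (k + 1) ^ 2 *
            ∫ ω, |X (k + 1) ω| * |∑ j ∈ Finset.Icc 1 k, X j ω|)
        + ∑ k ∈ Finset.Icc m (n - 1), c (k + 1) ^ 2 * ∫ ω, (X (k + 1) ω) ^ 2 := by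
  have hX : ∀ i, MemLp (X i) 2 ℙ := fun i =>
    (memLp_two_iff_integrable_sq (hmeas i).aestronglyMeasurable).2 (hL2 i)
  have hIcc : Icc m (n - 1) = Ico m n := by
    ext k
    simp only [mem_Icc, mem_Ico]
    omega
  rw [hIcc]
  exact (mul_measureReal_le_integral_sqMajorant hX c m n hε).trans_eq
    (integral_sqMajorant hX c m n)

/-- Kokoszka–Leipus Hájek–Rényi type inequality for arbitrary square-integrable random
variables `X_1, …, X_n` and nonnegative weights `c_1, …, c_n`. -/
theorem kokoszka_leipus_inequality
    {Ω : Type*} [MeasureSpace Ω] [IsProbabilityMeasure (ℙ : Measure Ω)]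
    (n : ℕ) (X : ℕ → Ω → ℝ) (c : ℕ → ℝ)
    (hmeas : ∀ i, Measurable (X i))
    (hL2 : ∀ i, Integrable (fun ω => (X i ω) ^ 2))
    (hc : ∀ i, 0 ≤ c i)
    (m : ℕ) (hm : 1 ≤ m) (hmn : m ≤ n)
    (ε : ℝ) (hε : 0 < ε) :
    ε ^ 2 * (ℙ {ω | ∃ k ∈ Finset.Icc m n,
        ε < c k * |∑ i ∈ Finset.Icc 1 k, X i ω|}).toReal
      ≤ c m ^ 2 * (∑ i ∈ Finset.Icc 1 m, ∑ j ∈ Finset.Icc 1 m, ∫ ω, X i ω * X j ω)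
        + (∑ k ∈ Finset.Icc m (n - 1), |c (k + 1) ^ 2 - c k ^ 2| *
            (∑ i ∈ Finset.Icc 1 k, ∑ j ∈ Finset.Icc 1 k, ∫ ω, X i ω * X j ω))
        + 2 * (∑ k ∈ Finset.Icc m (n - 1), c (k + 1) ^ 2 *
            ∫ ω, |X (k + 1) ω| * |∑ j ∈ Finset.Icc 1 k, X j ω|)
        + ∑ k ∈ Finset.Icc m (n - 1), c (k + 1) ^ 2 * ∫ ω, (X (k + 1) ω) ^ 2 :=
  kokoszka_leipus_inequality_general n X c hmeas hL2 m hm ε hε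
end

section
/- (Billingsley maximal inequality, Theorem 10.2) Let ξ_1,…,ξ_n be random variables with partial sums S_k = Σ_{i=1}^k ξ_i, S_0 = 0. Suppose there exist α > 1, β > 0 and nonnegative numbers u_1,…,u_n such that P(|S_j − S_i| ≥ λ) ≤ λ^{−β} (Σ_{l=i+1}^j u_l)^α for all λ > 0 and 0 ≤ i ≤ j ≤ n. Then there exists K > 0 depending only on α and β such that for all λ > 0, P(max_{1≤k≤n} |S_k| ≥ λ) ≤ K λ^{−β} (Σ_{l=1}^n u_l)^α. -/
/-!
Strong induction on the length of the index interval `(a, b]`, with `U = ∑_{a<l≤b} u_l`.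
Let `m` be the first index at which the `u`-mass of `(a, m]` reaches `U / 2`. If
`|S_k - S_a| ≥ λ` for some `k ∈ (a, b]`, then either this already happens for some `k < m`,
or `|S_m - S_a| ≥ ελ`, or `|S_k - S_m| ≥ (1 - ε)λ` for some `k ∈ (m, b]`. The two outer blocks
carry mass at most `U / 2`, so by induction they contribute `K 2^{-α} λ^{-β} U^α` and
`K (1 - ε)^{-β} 2^{-α} λ^{-β} U^α`, and the middle event contributes `ε^{-β} λ^{-β} U^α`.
Since `α > 1`, `ε` and `K` can be chosen so that these add up to at most `K λ^{-β} U^α`.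
-/

open MeasureTheory ProbabilityTheory Finset

theorem exists_halving_index (u : ℕ → ℝ) {a b : ℕ} (hab : a < b)
    (hU : 0 ≤ ∑ l ∈ Ioc a b, u l) :
    ∃ m, a < m ∧ m ≤ b ∧ ∑ l ∈ Ioc a (m - 1), u l ≤ (∑ l ∈ Ioc a b, u l) / 2 ∧
      ∑ l ∈ Ioc m b, u l ≤ (∑ l ∈ Ioc a b, u l) / 2 := by
  classical
  set U := ∑ l ∈ Ioc a b, u l
  have hex : ∃ k, a < k ∧ U / 2 ≤ ∑ l ∈ Ioc a k, u l := ⟨b, hab, by linarith⟩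
  obtain ⟨ham, hm⟩ := Nat.find_spec hex
  have hmb : Nat.find hex ≤ b := Nat.find_min' hex ⟨hab, by linarith⟩
  refine ⟨Nat.find hex, ham, hmb, ?_, ?_⟩
  · by_cases h : a < Nat.find hex - 1
    · exact le_of_not_ge (not_and.mp (Nat.find_min hex (by omega)) h)
    · rw [Ioc_eq_empty (by omega), sum_empty]
      linarith
  · have := sum_Ioc_consecutive u ham.le hmb
    linarith

section

variable {Ω : Type*}

def maxIncrementEvent (S : ℕ → Ω → ℝ) (a b : ℕ) (lam : ℝ) : Set Ω :=
  {ω | ∃ k ∈ Ioc a b, lam ≤ |S k ω - S a ω|}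

theorem maxIncrementEvent_subset_union (S : ℕ → Ω → ℝ) {a b m : ℕ} {lam ε : ℝ}
    (hlam : 0 ≤ lam) (hε : ε ≤ 1) :
    maxIncrementEvent S a b lam ⊆ maxIncrementEvent S a (m - 1) lam ∪
      {ω | ε * lam ≤ |S m ω - S a ω|} ∪ maxIncrementEvent S m b ((1 - ε) * lam) := by
  rintro ω ⟨k, hk, hkω⟩
  rw [mem_Ioc] at hk
  by_cases hm : ε * lam ≤ |S m ω - S a ω|
  · exact Or.inl (Or.inr hm)
  push Not at hm
  rcases lt_trichotomy k m with hkm | rfl | hmk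
  · exact Or.inl (Or.inl ⟨k, mem_Ioc.mpr ⟨hk.1, by omega⟩, hkω⟩)
  · exact absurd hkω (not_le.2 (hm.trans_le (mul_le_of_le_one_left hlam hε)))
  · refine Or.inr ⟨k, mem_Ioc.mpr ⟨hmk, hk.2⟩, ?_⟩
    have := abs_sub_abs_le_abs_sub (S k ω - S a ω) (S m ω - S a ω)
    rw [sub_sub_sub_cancel_right] at this
    linarith

variable [MeasurableSpace Ω]

theorem measureReal_maxIncrementEvent_le_add (μ : Measure Ω) [IsFiniteMeasure μ]
    (S : ℕ → Ω → ℝ) {a b m : ℕ} {lam ε : ℝ} (hlam : 0 ≤ lam) (hε : ε ≤ 1) :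
    μ.real (maxIncrementEvent S a b lam) ≤ μ.real (maxIncrementEvent S a (m - 1) lam)
      + μ.real {ω | ε * lam ≤ |S m ω - S a ω|}
      + μ.real (maxIncrementEvent S m b ((1 - ε) * lam)) :=
  (measureReal_mono (maxIncrementEvent_subset_union S hlam hε)).trans
    ((measureReal_union_le _ _).trans (add_le_add_left (measureReal_union_le _ _) _))

def HasIncrementTailBound (μ : Measure Ω) (S : ℕ → Ω → ℝ) (u : ℕ → ℝ) (α β : ℝ)
    (a b : ℕ) : Prop :=
  ∀ lam : ℝ, 0 < lam → ∀ i j : ℕ, a ≤ i → i ≤ j → j ≤ b →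
    μ.real {ω | lam ≤ |S j ω - S i ω|} ≤ lam ^ (-β) * (∑ l ∈ Ioc i j, u l) ^ α

variable {μ : Measure Ω} {S : ℕ → Ω → ℝ} {u : ℕ → ℝ} {α β : ℝ}

theorem HasIncrementTailBound.mono {a b a' b' : ℕ} (h : HasIncrementTailBound μ S u α β a b)
    (ha : a ≤ a') (hb : b' ≤ b) : HasIncrementTailBound μ S u α β a' b' :=
  fun lam hlam i j hi hij hj => h lam hlam i j (ha.trans hi) hij (hj.trans hb)

theorem measureReal_maxIncrementEvent_le [IsFiniteMeasure μ] {ε K : ℝ} (hα : 0 ≤ α)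
    (hε0 : 0 < ε) (hε1 : ε < 1) (hK : 0 ≤ K)
    (hrec : K * 2 ^ (-α) + ε ^ (-β) + K * (1 - ε) ^ (-β) * 2 ^ (-α) ≤ K)
    (hu : ∀ l, 0 ≤ u l) {a b : ℕ} (hS : HasIncrementTailBound μ S u α β a b) {lam : ℝ}
    (hlam : 0 < lam) :
    μ.real (maxIncrementEvent S a b lam) ≤ K * lam ^ (-β) * (∑ l ∈ Ioc a b, u l) ^ α := by
  induction hn : b - a using Nat.strong_induction_on generalizing a b lam with
  | _ n ih =>
  have hsum : ∀ i j, 0 ≤ ∑ l ∈ Ioc i j, u l := fun i j => sum_nonneg fun l _ => hu l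
  rcases le_or_gt b a with hba | hab
  · have hempty : maxIncrementEvent S a b lam = ∅ := by
      simp [maxIncrementEvent, Ioc_eq_empty_of_le hba]
    rw [hempty, measureReal_empty]
    exact mul_nonneg (mul_nonneg hK (by positivity)) (Real.rpow_nonneg (hsum a b) _)
  set U := ∑ l ∈ Ioc a b, u l
  obtain ⟨m, ham, hmb, hleft, hright⟩ := exists_halving_index u hab (hsum a b)
  have hB := ih (m - 1 - a) (by omega) (hS.mono le_rfl (by omega)) hlam rfl
  have hC := hS (ε * lam) (by positivity) a m le_rfl ham.le hmb
  have hD := ih (b - m) (by omega) (hS.mono ham.le le_rfl)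
    (mul_pos (sub_pos.2 hε1) hlam) rfl
  calc μ.real (maxIncrementEvent S a b lam)
      ≤ μ.real (maxIncrementEvent S a (m - 1) lam)
          + μ.real {ω | ε * lam ≤ |S m ω - S a ω|}
          + μ.real (maxIncrementEvent S m b ((1 - ε) * lam)) :=
        measureReal_maxIncrementEvent_le_add μ S hlam.le hε1.le
    _ ≤ K * lam ^ (-β) * (U / 2) ^ α + (ε * lam) ^ (-β) * U ^ α
          + K * ((1 - ε) * lam) ^ (-β) * (U / 2) ^ α := by
        have hhalf : ∀ {i j : ℕ}, ∑ l ∈ Ioc i j, u l ≤ U / 2 →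
            (∑ l ∈ Ioc i j, u l) ^ α ≤ (U / 2) ^ α := fun hx =>
          Real.rpow_le_rpow (hsum _ _) hx hα
        have hCU : (∑ l ∈ Ioc a m, u l) ^ α ≤ U ^ α := Real.rpow_le_rpow (hsum _ _)
          (sum_le_sum_of_subset_of_nonneg (Ioc_subset_Ioc_right hmb) fun l _ _ => hu l) hα
        gcongr ?_ + ?_ + ?_
        · exact hB.trans (mul_le_mul_of_nonneg_left (hhalf hleft) (by positivity))
        · exact hC.trans (mul_le_mul_of_nonneg_left hCU (by positivity))
        · exact hD.trans (mul_le_mul_of_nonneg_left (hhalf hright) (by positivity))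
    _ = (K * 2 ^ (-α) + ε ^ (-β) + K * (1 - ε) ^ (-β) * 2 ^ (-α))
          * (lam ^ (-β) * U ^ α) := by
        rw [Real.div_rpow (hsum a b) zero_le_two, Real.rpow_neg zero_le_two,
          Real.mul_rpow hε0.le hlam.le, Real.mul_rpow (sub_pos.2 hε1).le hlam.le]
        ring
    _ ≤ K * lam ^ (-β) * U ^ α := by
        rw [← mul_assoc]
        exact mul_le_mul_of_nonneg_right (mul_le_mul_of_nonneg_right hrec (by positivity))
          (Real.rpow_nonneg (hsum a b) _)

end

-- Taking `1 - ε = 2 ^ ((1 - α) / β)` makes `(1 - ε) ^ (-β) * 2 ^ (-α) = 1 / 2`, and `α > 1`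
-- gives `2 ^ (-α) < 1 / 2`, so `K = ε ^ (-β) / (1 / 2 - 2 ^ (-α))` solves the recurrence.
theorem exists_billingsley_constants {α β : ℝ} (hα : 1 < α) (hβ : 0 < β) :
    ∃ ε K : ℝ, 0 < ε ∧ ε < 1 ∧ 0 < K ∧
      K * 2 ^ (-α) + ε ^ (-β) + K * (1 - ε) ^ (-β) * 2 ^ (-α) ≤ K := by
  set t : ℝ := 2 ^ ((1 - α) / β)
  have ht0 : 0 < t := by positivity
  have ht1 : t < 1 :=
    Real.rpow_lt_one_of_one_lt_of_neg one_lt_two (div_neg_of_neg_of_pos (by linarith) hβ)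
  have htc : t ^ (-β) * 2 ^ (-α) = 1 / 2 := by
    rw [← Real.rpow_mul zero_le_two, ← Real.rpow_add two_pos,
      show (1 - α) / β * -β + -α = -1 by field_simp; ring, Real.rpow_neg_one]
    norm_num
  have hc : (2 : ℝ) ^ (-α) < 1 / 2 := by
    have := Real.rpow_lt_rpow_of_exponent_lt one_lt_two (show -α < -1 by linarith)
    rwa [Real.rpow_neg_one, inv_eq_one_div] at this
  set K := (1 - t) ^ (-β) / (1 / 2 - 2 ^ (-α))
  have hK : (1 - t) ^ (-β) = K * (1 / 2 - 2 ^ (-α)) :=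
    (div_mul_cancel₀ _ (by linarith)).symm
  refine ⟨1 - t, K, by linarith, by linarith,
    div_pos (Real.rpow_pos_of_pos (by linarith) _) (by linarith), ?_⟩
  rw [sub_sub_cancel, mul_assoc K, htc]
  linarith

/-- Billingsley's maximal inequality (Theorem 10.2): if
`P(|S_j - S_i| ≥ λ) ≤ λ^{-β} (∑_{l=i+1}^j u_l)^α` with `α > 1`, `β > 0`, then
`P(max_{1≤k≤n} |S_k| ≥ λ) ≤ K λ^{-β} (∑_{l=1}^n u_l)^α`, with `K` depending only on
`α` and `β`. -/
theorem billingsley_maximal_inequality (α β : ℝ) (hα : 1 < α) (hβ : 0 < β) :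
    ∃ K > 0, ∀ (Ω : Type) [MeasureSpace Ω] [IsProbabilityMeasure (ℙ : Measure Ω)]
      (n : ℕ) (ξ : ℕ → Ω → ℝ) (u : ℕ → ℝ),
      (∀ l, Measurable (ξ l)) →
      (∀ l, 0 ≤ u l) →
      (∀ lam : ℝ, 0 < lam → ∀ i j : ℕ, i ≤ j → j ≤ n →
        (ℙ {ω | lam ≤ |(∑ l ∈ Finset.Icc 1 j, ξ l ω) - ∑ l ∈ Finset.Icc 1 i, ξ l ω|}).toReal
          ≤ lam ^ (-β) * (∑ l ∈ Finset.Icc (i + 1) j, u l) ^ α) →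
      ∀ lam : ℝ, 0 < lam →
        (ℙ {ω | ∃ k ∈ Finset.Icc 1 n, lam ≤ |∑ l ∈ Finset.Icc 1 k, ξ l ω|}).toReal
          ≤ K * lam ^ (-β) * (∑ l ∈ Finset.Icc 1 n, u l) ^ α := by
  obtain ⟨ε, K, hε0, hε1, hK, hrec⟩ := exists_billingsley_constants hα hβ
  refine ⟨K, hK, fun Ω _ _ n ξ u _ hu H lam hlam => ?_⟩
  have hS : HasIncrementTailBound ℙ (fun k ω => ∑ l ∈ Icc 1 k, ξ l ω) u α β 0 n :=
    fun lam hlam i j _ hij hjn => by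
      simpa only [Measure.real, ← Icc_add_one_left_eq_Ioc] using H lam hlam i j hij hjn
  simpa [Measure.real, maxIncrementEvent, ← Icc_add_one_left_eq_Ioc] using
    measureReal_maxIncrementEvent_le (zero_le_one.trans hα.le) hε0 hε1 hK.le hrec hu hS hlam
end
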